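/- arXiv:2405.01357 — 2 statements merged into one kernel-verified Lean document; each statement's English description precedes it below -/
import Mathlib

section
/- (Schwarz–Pick inequality for derivatives on the polydisk.) Let n ≥ 1 and let f : ℂⁿ → ℂ be holomorphic on the open unit polydisk 𝔻ⁿ with f(𝔻ⁿ) ⊆ 𝔻 (i.e. |f(z)| < 1 for z ∈ 𝔻ⁿ). Then for every a = (a₁,…,aₙ) ∈ 𝔻ⁿ, the sum over i = 1,…,n of (1 − |aᵢ|²)·|∂f/∂zᵢ(a)| is at most 1 − |f(a)|². -/
/-!
For `εᵢ ∈ ℂ` with `|εᵢ| ≤ 1`, the map `ζ ↦ (φ_{aᵢ}(εᵢ ζ))ᵢ`, where `φ_c(w) = (w + c) / (1 + c̄ w)`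
is the disc automorphism sending `0` to `c`, is a holomorphic disc in the polydisk through `a`
with velocity `(εᵢ (1 - |aᵢ|²))ᵢ` at `0`. The one-variable Schwarz–Pick inequality at the origin
(the Schwarz lemma after composing with `φ_{-f(a)}`), applied to `f` along this disc, bounds
`|∑ᵢ εᵢ (1 - |aᵢ|²) ∂f/∂zᵢ(a)|` by `1 - |f(a)|²`. Taking `εᵢ = conj(∂f/∂zᵢ(a)) / |∂f/∂zᵢ(a)|`
makes every term of that sum real and nonnegative.
-/

open Complex ComplexConjugate Metric Set

lemma one_sub_norm_sq_pos {E : Type*} [SeminormedAddGroup E] {x : E} (hx : ‖x‖ < 1) :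
    0 < 1 - ‖x‖ ^ 2 := by
  nlinarith [norm_nonneg x]

lemma norm_mul_lt_one_of_le_of_lt {R : Type*} [SeminormedRing R] {x y : R} (hx : ‖x‖ ≤ 1)
    (hy : ‖y‖ < 1) : ‖x * y‖ < 1 :=
  (norm_mul_le x y).trans_lt (mul_lt_one_of_nonneg_of_lt_one_right hx (norm_nonneg y) hy)

noncomputable def diskMobius (c w : ℂ) : ℂ := (w + c) / (1 + conj c * w)

section diskMobius

variable {c w : ℂ}

lemma one_add_conj_mul_ne_zero (hc : ‖c‖ < 1) (hw : ‖w‖ < 1) : 1 + conj c * w ≠ 0 := by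
  intro h
  have hnorm : ‖conj c * w‖ = 1 := by rw [eq_neg_of_add_eq_zero_right h, norm_neg, norm_one]
  rw [norm_mul, norm_conj] at hnorm
  nlinarith [norm_nonneg c, norm_nonneg w]

lemma norm_one_add_conj_mul_sq_sub_norm_add_sq (c w : ℂ) :
    ‖1 + conj c * w‖ ^ 2 - ‖w + c‖ ^ 2 = (1 - ‖c‖ ^ 2) * (1 - ‖w‖ ^ 2) := by
  apply ofReal_injective
  push_cast
  simp only [← mul_conj', map_add, map_mul, map_one, conj_conj]
  ring

lemma norm_diskMobius_lt_one (hc : ‖c‖ < 1) (hw : ‖w‖ < 1) : ‖diskMobius c w‖ < 1 := by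
  rw [diskMobius, norm_div, div_lt_one (norm_pos_iff.2 (one_add_conj_mul_ne_zero hc hw))]
  have hsq : ‖w + c‖ ^ 2 < ‖1 + conj c * w‖ ^ 2 := by
    linarith [norm_one_add_conj_mul_sq_sub_norm_add_sq c w,
      mul_pos (one_sub_norm_sq_pos hc) (one_sub_norm_sq_pos hw)]
  exact lt_of_pow_lt_pow_left₀ 2 (norm_nonneg _) hsq

@[simp]
lemma diskMobius_zero_right (c : ℂ) : diskMobius c 0 = c := by
  simp [diskMobius]

@[simp]
lemma diskMobius_neg_self (c : ℂ) : diskMobius (-c) c = 0 := by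
  simp [diskMobius]

lemma hasDerivAt_diskMobius (hden : 1 + conj c * w ≠ 0) :
    HasDerivAt (diskMobius c) (((1 - ‖c‖ ^ 2 : ℝ) : ℂ) / (1 + conj c * w) ^ 2) w := by
  refine (((hasDerivAt_id w).add_const c).div
    (((hasDerivAt_id w).const_mul (conj c)).const_add 1) hden).congr_deriv ?_
  push_cast
  rw [← conj_mul']
  simp only [id, mul_one]
  ring

lemma differentiableAt_diskMobius (hc : ‖c‖ < 1) (hw : ‖w‖ < 1) :
    DifferentiableAt ℂ (diskMobius c) w :=
  (hasDerivAt_diskMobius (one_add_conj_mul_ne_zero hc hw)).differentiableAt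

lemma hasDerivAt_diskMobius_zero (c : ℂ) :
    HasDerivAt (diskMobius c) ((1 - ‖c‖ ^ 2 : ℝ) : ℂ) 0 := by
  simpa using hasDerivAt_diskMobius (c := c) (w := 0) (by simp)

lemma hasDerivAt_diskMobius_neg_self (hc : ‖c‖ < 1) :
    HasDerivAt (diskMobius (-c)) ((1 - ‖c‖ ^ 2 : ℝ) : ℂ)⁻¹ c := by
  have hden : 1 + conj (-c) * c = ((1 - ‖c‖ ^ 2 : ℝ) : ℂ) := by
    push_cast
    rw [map_neg, neg_mul, conj_mul', sub_eq_add_neg]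
  have hpos : ((1 - ‖c‖ ^ 2 : ℝ) : ℂ) ≠ 0 := by
    exact_mod_cast (one_sub_norm_sq_pos hc).ne'
  convert hasDerivAt_diskMobius (hden.symm ▸ hpos) using 1
  rw [hden, norm_neg]
  field_simp

end diskMobius

theorem norm_deriv_le_one_sub_sq_of_mapsTo_ball {g : ℂ → ℂ}
    (hd : DifferentiableOn ℂ g (ball 0 1)) (hmaps : MapsTo g (ball 0 1) (ball 0 1)) :
    ‖deriv g 0‖ ≤ 1 - ‖g 0‖ ^ 2 := by
  set b := g 0
  have hb : ‖b‖ < 1 := mem_ball_zero_iff.1 (hmaps (mem_ball_self one_pos))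
  have hnb : ‖-b‖ < 1 := by rwa [norm_neg]
  have hcomp :
      HasDerivAt (diskMobius (-b) ∘ g) (((1 - ‖b‖ ^ 2 : ℝ) : ℂ)⁻¹ * deriv g 0) 0 :=
    (hasDerivAt_diskMobius_neg_self hb).comp 0
      (hd.differentiableAt (ball_mem_nhds 0 one_pos)).hasDerivAt
  have hschwarz : ‖deriv (diskMobius (-b) ∘ g) 0‖ ≤ 1 := by
    refine norm_deriv_le_one_of_mapsTo_ball (fun z hz => ?_) (fun z hz => ?_) one_pos
    · have hgz := mem_ball_zero_iff.1 (hmaps hz)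
      exact ((differentiableAt_diskMobius hnb hgz).comp z
        (hd.differentiableAt (isOpen_ball.mem_nhds hz))).differentiableWithinAt
    · simpa [b] using (norm_diskMobius_lt_one hnb (mem_ball_zero_iff.1 (hmaps hz))).le
  have hpos := one_sub_norm_sq_pos hb
  rw [hcomp.deriv, norm_mul, norm_inv, norm_real, Real.norm_of_nonneg hpos.le,
    inv_mul_le_iff₀ hpos, mul_one] at hschwarz
  exact hschwarz

lemma isOpen_polydisk {ι : Type*} [Finite ι] : IsOpen {z : ι → ℂ | ∀ i, ‖z i‖ < 1} := by
  rw [ofPred_forall]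
  exact isOpen_iInter_of_finite fun i => isOpen_lt (continuous_apply i).norm continuous_const

section mobiusDisc

variable {ι : Type*} {a ε : ι → ℂ} {ζ : ℂ}

noncomputable def mobiusDisc (a ε : ι → ℂ) (ζ : ℂ) : ι → ℂ :=
  fun i => diskMobius (a i) (ε i * ζ)

@[simp]
lemma mobiusDisc_zero (a ε : ι → ℂ) : mobiusDisc a ε 0 = a := by
  ext i
  simp [mobiusDisc]

lemma norm_mobiusDisc_lt_one (ha : ∀ i, ‖a i‖ < 1) (hε : ∀ i, ‖ε i‖ ≤ 1) (hζ : ‖ζ‖ < 1)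
    (i : ι) :
    ‖mobiusDisc a ε ζ i‖ < 1 :=
  norm_diskMobius_lt_one (ha i) (norm_mul_lt_one_of_le_of_lt (hε i) hζ)

lemma differentiableAt_mobiusDisc [Fintype ι] (ha : ∀ i, ‖a i‖ < 1) (hε : ∀ i, ‖ε i‖ ≤ 1)
    (hζ : ‖ζ‖ < 1) :
    DifferentiableAt ℂ (mobiusDisc a ε) ζ :=
  differentiableAt_pi.2 fun i => (differentiableAt_diskMobius (ha i)
    (norm_mul_lt_one_of_le_of_lt (hε i) hζ)).comp ζ (differentiableAt_id.const_mul (ε i))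

lemma hasDerivAt_mobiusDisc_zero [Fintype ι] (a ε : ι → ℂ) :
    HasDerivAt (mobiusDisc a ε) (fun i => ε i * ((1 - ‖a i‖ ^ 2 : ℝ) : ℂ)) 0 :=
  hasDerivAt_pi.2 fun i => ((hasDerivAt_diskMobius_zero (a i)).comp_of_eq 0
    ((hasDerivAt_id' 0).const_mul (ε i)) (mul_zero _).symm).congr_deriv (by ring)

end mobiusDisc

lemma norm_conj_div_norm_le_one (z : ℂ) : ‖conj z / ‖z‖‖ ≤ 1 := by
  rw [norm_div, norm_conj, norm_real, norm_norm]
  exact div_self_le_one _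

lemma conj_div_norm_mul_self (z : ℂ) : conj z / ‖z‖ * z = ‖z‖ := by
  rw [div_mul_eq_mul_div, conj_mul', sq, mul_self_div_self]

theorem norm_fderiv_apply_le_of_mapsTo_polydisk {ι : Type*} [Fintype ι] {f : (ι → ℂ) → ℂ}
    (hf : DifferentiableOn ℂ f {z | ∀ i, ‖z i‖ < 1})
    (hmap : ∀ z : ι → ℂ, (∀ i, ‖z i‖ < 1) → ‖f z‖ < 1)
    {a ε : ι → ℂ} (ha : ∀ i, ‖a i‖ < 1) (hε : ∀ i, ‖ε i‖ ≤ 1) :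
    ‖fderiv ℂ f a (fun i => ε i * ((1 - ‖a i‖ ^ 2 : ℝ) : ℂ))‖ ≤ 1 - ‖f a‖ ^ 2 := by
  have hfd : ∀ z : ι → ℂ, (∀ i, ‖z i‖ < 1) → DifferentiableAt ℂ f z := fun z hz =>
    hf.differentiableAt (isOpen_polydisk.mem_nhds hz)
  have hdisc : ∀ ζ ∈ ball (0 : ℂ) 1, ∀ i, ‖mobiusDisc a ε ζ i‖ < 1 := fun ζ hζ =>
    norm_mobiusDisc_lt_one ha hε (mem_ball_zero_iff.1 hζ)
  have hg : DifferentiableOn ℂ (f ∘ mobiusDisc a ε) (ball 0 1) := fun ζ hζ =>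
    ((hfd _ (hdisc ζ hζ)).comp ζ
      (differentiableAt_mobiusDisc ha hε (mem_ball_zero_iff.1 hζ))).differentiableWithinAt
  have hmaps : MapsTo (f ∘ mobiusDisc a ε) (ball 0 1) (ball 0 1) := fun ζ hζ =>
    mem_ball_zero_iff.2 (hmap _ (hdisc ζ hζ))
  have hderiv := (hfd a ha).hasFDerivAt.comp_hasDerivAt_of_eq 0
    (hasDerivAt_mobiusDisc_zero a ε) (mobiusDisc_zero a ε).symm
  simpa [hderiv.deriv] using norm_deriv_le_one_sub_sq_of_mapsTo_ball hg hmaps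

theorem schwarz_pick_polydisk_deriv_general (n : ℕ)
    (f : (Fin n → ℂ) → ℂ)
    (hf : DifferentiableOn ℂ f {z : Fin n → ℂ | ∀ i, ‖z i‖ < 1})
    (hmap : ∀ z : Fin n → ℂ, (∀ i, ‖z i‖ < 1) → ‖f z‖ < 1)
    (a : Fin n → ℂ) (ha : ∀ i, ‖a i‖ < 1) :
    ∑ i : Fin n, (1 - ‖a i‖ ^ 2) * ‖fderiv ℂ f a (Pi.single i 1)‖ ≤
      1 - ‖f a‖ ^ 2 := by
  set D : Fin n → ℂ := fun i => fderiv ℂ f a (Pi.single i 1)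
  have hL : fderiv ℂ f a (fun i => conj (D i) / ‖D i‖ * ((1 - ‖a i‖ ^ 2 : ℝ) : ℂ)) =
      ((∑ i, (1 - ‖a i‖ ^ 2) * ‖D i‖ : ℝ) : ℂ) := by
    rw [pi_eq_sum_univ' (fun i => conj (D i) / ‖D i‖ * ((1 - ‖a i‖ ^ 2 : ℝ) : ℂ)), map_sum]
    push_cast
    refine Finset.sum_congr rfl fun i _ => ?_
    rw [map_smul, smul_eq_mul]
    linear_combination (1 - (‖a i‖ : ℂ) ^ 2) * conj_div_norm_mul_self (D i)
  have hnonneg : 0 ≤ ∑ i, (1 - ‖a i‖ ^ 2) * ‖D i‖ := Finset.sum_nonneg fun i _ =>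
    mul_nonneg (one_sub_norm_sq_pos (ha i)).le (norm_nonneg _)
  have key := norm_fderiv_apply_le_of_mapsTo_polydisk hf hmap ha
    (fun i => norm_conj_div_norm_le_one (D i))
  rwa [hL, norm_real, Real.norm_of_nonneg hnonneg] at key

/-- **The Schwarz–Pick inequality for derivatives on the polydisk.** -/
theorem schwarz_pick_polydisk_deriv (n : ℕ) (hn : 1 ≤ n)
    (f : (Fin n → ℂ) → ℂ)
    (hf : DifferentiableOn ℂ f {z : Fin n → ℂ | ∀ i, ‖z i‖ < 1})
    (hmap : ∀ z : Fin n → ℂ, (∀ i, ‖z i‖ < 1) → ‖f z‖ < 1)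
    (a : Fin n → ℂ) (ha : ∀ i, ‖a i‖ < 1) :
    ∑ i : Fin n, (1 - ‖a i‖ ^ 2) * ‖fderiv ℂ f a (Pi.single i 1)‖ ≤
      1 - ‖f a‖ ^ 2 :=
  schwarz_pick_polydisk_deriv_general n f hf hmap a ha
end

section
/- (Schwarz–Pick inequality on a distinguished variety, continuous case.) Let a = (a₁,a₂) and b = (b₁,b₂) be points of the open bidisk 𝔻². Then there exists a distinguished variety V ∩ 𝔻² (with V = Z(q) the zero set of a polynomial q ∈ ℂ[z,w]) such that for every function f : ℂ² → ℂ that is continuous on the closed bidisk, holomorphic on 𝔻², and satisfies |f(z)| ≤ 1 for all z ∈ V ∩ 𝔻², one has |f(a) − f(b)| ≤ M · |1 − conj(f(a))·f(b)|, where M = max( |a₁ − b₁|/|1 − conj(a₁)·b₁| , |a₂ − b₂|/|1 − conj(a₂)·b₂| ). -/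
/-- The open bidisk `𝔻² ⊆ ℂ²`. -/
def openBidisk : Set (ℂ × ℂ) := {z | ‖z.1‖ < 1 ∧ ‖z.2‖ < 1}

/-- The closed bidisk. -/
def closedBidisk : Set (ℂ × ℂ) := {z | ‖z.1‖ ≤ 1 ∧ ‖z.2‖ ≤ 1}

/-- The torus `𝕋²`, the distinguished boundary of the bidisk. -/
def torus : Set (ℂ × ℂ) := {z | ‖z.1‖ = 1 ∧ ‖z.2‖ = 1}

/-- The zero set in `ℂ²` of a polynomial in two variables. -/
def zeroSet (q : MvPolynomial (Fin 2) ℂ) : Set (ℂ × ℂ) :=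
  {z | MvPolynomial.eval ![z.1, z.2] q = 0}

/-!
Assume `d(a₂, b₂) ≤ d(a₁, b₁)` for the pseudo-hyperbolic distance `d(x, y) = |mobius x y|`
(otherwise exchange the coordinates). Two-point Pick interpolation then yields a rational inner
function `φ = N / D` of degree at most two with `φ a₁ = a₂` and `φ b₁ = b₂`: a rotation of
`u = mobius a₁` when the distances agree, and `u * mobius c (mobius β u)` otherwise, followed by
`mobius a₂`. Since `φ` maps the open disc into itself and the circle to the circle, the graph
`{w D(z) = N(z)}` of `φ` is a distinguished variety, and `z ↦ f (z, φ z)` is a holomorphic map of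
the disc into the closed disc, to which the Schwarz–Pick lemma applies at `a₁` and `b₁`.
-/

open Complex ComplexConjugate Metric Set Polynomial

noncomputable def mobius (α z : ℂ) : ℂ := (α - z) / (1 - conj α * z)

theorem norm_mobius (α z : ℂ) : ‖mobius α z‖ = ‖α - z‖ / ‖1 - conj α * z‖ := norm_div _ _

@[simp] theorem mobius_zero (α : ℂ) : mobius α 0 = α := by simp [mobius]

@[simp] theorem mobius_self (α : ℂ) : mobius α α = 0 := by simp [mobius]

/-- The identity `|1 - ᾱz|² - |α - z|² = (1 - |α|²)(1 - |z|²)` in homogeneous form `z = u / v`,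
so that it applies to a quotient of polynomials without dividing. -/
theorem norm_sub_conj_mul_sq_sub_norm_mul_sub_sq (α u v : ℂ) :
    ‖v - conj α * u‖ ^ 2 - ‖α * v - u‖ ^ 2 = (1 - ‖α‖ ^ 2) * (‖v‖ ^ 2 - ‖u‖ ^ 2) := by
  simp only [← normSq_eq_norm_sq, normSq_apply, sub_re, sub_im, mul_re, mul_im, conj_re, conj_im]
  ring

section NormComparison

variable {α u v : ℂ}

theorem norm_mul_sub_le_norm_sub_conj_mul (hα : ‖α‖ < 1) (huv : ‖u‖ ≤ ‖v‖) :
    ‖α * v - u‖ ≤ ‖v - conj α * u‖ := by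
  have := norm_sub_conj_mul_sq_sub_norm_mul_sub_sq α u v
  have hα' : 0 < 1 - ‖α‖ ^ 2 := by nlinarith [norm_nonneg α]
  have : ‖u‖ ^ 2 ≤ ‖v‖ ^ 2 := by gcongr
  rw [← sq_le_sq₀ (norm_nonneg _) (norm_nonneg _)]
  nlinarith [mul_nonneg hα'.le (sub_nonneg.2 this)]

theorem norm_mul_sub_lt_norm_sub_conj_mul (hα : ‖α‖ < 1) (huv : ‖u‖ < ‖v‖) :
    ‖α * v - u‖ < ‖v - conj α * u‖ := by
  have := norm_sub_conj_mul_sq_sub_norm_mul_sub_sq α u v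
  have hα' : 0 < 1 - ‖α‖ ^ 2 := by nlinarith [norm_nonneg α]
  have : ‖u‖ ^ 2 < ‖v‖ ^ 2 := by gcongr
  rw [← sq_lt_sq₀ (norm_nonneg _) (norm_nonneg _)]
  nlinarith [mul_pos hα' (sub_pos.2 this)]

theorem norm_mul_sub_eq_norm_sub_conj_mul (huv : ‖u‖ = ‖v‖) :
    ‖α * v - u‖ = ‖v - conj α * u‖ := by
  have := norm_sub_conj_mul_sq_sub_norm_mul_sub_sq α u v
  rw [huv, sub_self, mul_zero, sub_eq_zero] at this
  exact (sq_eq_sq₀ (norm_nonneg _) (norm_nonneg _)).1 this.symm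

theorem sub_conj_mul_ne_zero (hα : ‖α‖ < 1) (huv : ‖u‖ ≤ ‖v‖) (hv : v ≠ 0) :
    v - conj α * u ≠ 0 := by
  intro h
  have hv' : 0 < ‖v‖ := norm_pos_iff.2 hv
  have : ‖v‖ = ‖α‖ * ‖u‖ := by rw [sub_eq_zero.1 h, norm_mul, norm_conj]
  nlinarith [mul_le_mul_of_nonneg_left huv (norm_nonneg α)]

end NormComparison

section Mobius

variable {α z : ℂ}

theorem one_sub_conj_mul_ne_zero (hα : ‖α‖ < 1) (hz : ‖z‖ ≤ 1) : 1 - conj α * z ≠ 0 :=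
  sub_conj_mul_ne_zero hα (by simpa using hz) one_ne_zero

theorem norm_mobius_lt_one (hα : ‖α‖ < 1) (hz : ‖z‖ < 1) : ‖mobius α z‖ < 1 := by
  rw [norm_mobius, div_lt_one (norm_pos_iff.2 (one_sub_conj_mul_ne_zero hα hz.le))]
  simpa using norm_mul_sub_lt_norm_sub_conj_mul (v := 1) hα (by simpa using hz)

theorem mobius_mobius (hα : ‖α‖ < 1) (hz : ‖z‖ ≤ 1) : mobius α (mobius α z) = z := by
  have hz' := one_sub_conj_mul_ne_zero hα hz
  have hα' := one_sub_conj_mul_ne_zero hα hα.le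
  rw [mobius, mobius, sub_div' hz', mul_div_assoc', one_sub_div hz', div_div_div_cancel_right₀ hz',
    div_eq_iff (by convert hα' using 1; ring)]
  ring

theorem differentiableAt_mobius (hα : ‖α‖ < 1) (hz : ‖z‖ ≤ 1) :
    DifferentiableAt ℂ (mobius α) z :=
  ((differentiableAt_const α).sub differentiableAt_id).div
    ((differentiableAt_const 1).sub ((differentiableAt_const _).mul differentiableAt_id))
    (one_sub_conj_mul_ne_zero hα hz)

theorem mapsTo_mobius_ball (hα : α ∈ ball (0 : ℂ) 1) : MapsTo (mobius α) (ball 0 1) (ball 0 1) :=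
  fun _ hz => mem_ball_zero_iff.2 <|
    norm_mobius_lt_one (mem_ball_zero_iff.1 hα) (mem_ball_zero_iff.1 hz)

theorem differentiableOn_mobius_ball (hα : α ∈ ball (0 : ℂ) 1) :
    DifferentiableOn ℂ (mobius α) (ball 0 1) :=
  fun _ hz => (differentiableAt_mobius (mem_ball_zero_iff.1 hα)
    (mem_ball_zero_iff.1 hz).le).differentiableWithinAt

end Mobius

section SchwarzPick

variable {g : ℂ → ℂ} {a b : ℂ}

theorem norm_mobius_le_of_mapsTo_ball (hd : DifferentiableOn ℂ g (ball 0 1))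
    (hg : MapsTo g (ball 0 1) (ball 0 1)) (ha : a ∈ ball (0 : ℂ) 1) (hb : b ∈ ball (0 : ℂ) 1) :
    ‖mobius (g a) (g b)‖ ≤ ‖mobius a b‖ := by
  set F := mobius (g a) ∘ g ∘ mobius a
  have hF : MapsTo F (ball 0 1) (ball 0 1) :=
    (mapsTo_mobius_ball (hg ha)).comp (hg.comp (mapsTo_mobius_ball ha))
  have hFd : DifferentiableOn ℂ F (ball 0 1) :=
    (differentiableOn_mobius_ball (hg ha)).comp (hd.comp (differentiableOn_mobius_ball ha)
      (mapsTo_mobius_ball ha)) (hg.comp (mapsTo_mobius_ball ha))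
  have hF0 : F 0 = 0 := by simp [F]
  calc ‖mobius (g a) (g b)‖ = ‖F (mobius a b)‖ := by
        simp [F, mobius_mobius (mem_ball_zero_iff.1 ha) (mem_ball_zero_iff.1 hb).le]
    _ ≤ ‖mobius a b‖ := norm_le_norm_of_mapsTo_ball hFd (hF.mono_right ball_subset_closedBall) hF0
        (mem_ball_zero_iff.1 (mapsTo_mobius_ball ha hb))

theorem norm_sub_le_norm_mobius_mul_of_mapsTo_closedBall (hd : DifferentiableOn ℂ g (ball 0 1))
    (hg : MapsTo g (ball 0 1) (closedBall 0 1)) (ha : a ∈ ball (0 : ℂ) 1)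
    (hb : b ∈ ball (0 : ℂ) 1) :
    ‖g a - g b‖ ≤ ‖mobius a b‖ * ‖1 - conj (g a) * g b‖ := by
  by_cases hg' : MapsTo g (ball 0 1) (ball 0 1)
  · have hden : 0 < ‖1 - conj (g a) * g b‖ := norm_pos_iff.2 <| one_sub_conj_mul_ne_zero
      (mem_ball_zero_iff.1 (hg' ha)) (mem_ball_zero_iff.1 (hg' hb)).le
    have := norm_mobius_le_of_mapsTo_ball hd hg' ha hb
    rwa [norm_mobius, div_le_iff₀ hden] at this
  · obtain ⟨c, hc, hgc⟩ := not_forall₂.1 hg'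
    have hmax : IsMaxOn (norm ∘ g) (ball 0 1) c := fun z hz =>
      (mem_closedBall_zero_iff.1 (hg hz)).trans (not_lt.1 (mt mem_ball_zero_iff.2 hgc))
    have hconst := eqOn_of_isPreconnected_of_isMaxOn_norm (convex_ball _ _).isPreconnected
      isOpen_ball hd hc hmax
    simp only [hconst ha, hconst hb, Function.const_apply, sub_self, norm_zero]
    positivity

end SchwarzPick

structure IsRationalInner (N D : ℂ[X]) : Prop where
  eval_ne_zero : ∀ z : ℂ, ‖z‖ ≤ 1 → D.eval z ≠ 0
  norm_eval_lt : ∀ z : ℂ, ‖z‖ < 1 → ‖N.eval z‖ < ‖D.eval z‖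
  norm_eval_eq : ∀ z : ℂ, ‖z‖ = 1 → ‖N.eval z‖ = ‖D.eval z‖

theorem eval_div_eval_mobius {N D : ℂ[X]} {z : ℂ} (α : ℂ) (hD : D.eval z ≠ 0) :
    (C α * D - N).eval z / (D - C (conj α) * N).eval z = mobius α (N.eval z / D.eval z) := by
  rw [mobius, ← mul_div_mul_right (α - _) _ hD]
  simp only [eval_sub, eval_mul, eval_C, sub_mul, one_mul, mul_assoc, div_mul_cancel₀ _ hD]

namespace IsRationalInner

variable {N D N₁ D₁ N₂ D₂ : ℂ[X]} {z : ℂ}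

theorem norm_eval_le (h : IsRationalInner N D) (hz : ‖z‖ ≤ 1) : ‖N.eval z‖ ≤ ‖D.eval z‖ := by
  rcases hz.lt_or_eq with hz | hz
  exacts [(h.norm_eval_lt z hz).le, (h.norm_eval_eq z hz).le]

theorem norm_div_lt_one (h : IsRationalInner N D) (hz : ‖z‖ < 1) :
    ‖N.eval z / D.eval z‖ < 1 := by
  rw [norm_div, div_lt_one (norm_pos_iff.2 (h.eval_ne_zero z hz.le))]
  exact h.norm_eval_lt z hz

theorem norm_div_eq_one (h : IsRationalInner N D) (hz : ‖z‖ = 1) :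
    ‖N.eval z / D.eval z‖ = 1 := by
  rw [norm_div, h.norm_eval_eq z hz, div_self (norm_ne_zero_iff.2 (h.eval_ne_zero z hz.le))]

theorem differentiableAt_div (h : IsRationalInner N D) (hz : ‖z‖ ≤ 1) :
    DifferentiableAt ℂ (fun z => N.eval z / D.eval z) z :=
  N.differentiableAt.div D.differentiableAt (h.eval_ne_zero z hz)

theorem mobius_comp (h : IsRationalInner N D) {α : ℂ} (hα : ‖α‖ < 1) :
    IsRationalInner (C α * D - N) (D - C (conj α) * N) where
  eval_ne_zero z hz := by
    simpa using sub_conj_mul_ne_zero hα (h.norm_eval_le hz) (h.eval_ne_zero z hz)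
  norm_eval_lt z hz := by
    simpa using norm_mul_sub_lt_norm_sub_conj_mul hα (h.norm_eval_lt z hz)
  norm_eval_eq z hz := by
    simpa using norm_mul_sub_eq_norm_sub_conj_mul (h.norm_eval_eq z hz)

theorem mul (h₁ : IsRationalInner N₁ D₁) (h₂ : IsRationalInner N₂ D₂) :
    IsRationalInner (N₁ * N₂) (D₁ * D₂) where
  eval_ne_zero z hz := by
    simpa using ⟨h₁.eval_ne_zero z hz, h₂.eval_ne_zero z hz⟩
  norm_eval_lt z hz := by
    simpa only [eval_mul, norm_mul] using
      mul_lt_mul'' (h₁.norm_eval_lt z hz) (h₂.norm_eval_lt z hz) (norm_nonneg _) (norm_nonneg _)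
  norm_eval_eq z hz := by
    simp only [eval_mul, norm_mul, h₁.norm_eval_eq z hz, h₂.norm_eval_eq z hz]

theorem C_mul (h : IsRationalInner N D) {c : ℂ} (hc : ‖c‖ = 1) : IsRationalInner (C c * N) D where
  eval_ne_zero := h.eval_ne_zero
  norm_eval_lt z hz := by simpa [hc] using h.norm_eval_lt z hz
  norm_eval_eq z hz := by simpa [hc] using h.norm_eval_eq z hz

end IsRationalInner

theorem isRationalInner_X : IsRationalInner X 1 where
  eval_ne_zero _ _ := by simp
  norm_eval_lt _ hz := by simpa using hz
  norm_eval_eq _ hz := by simpa using hz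

theorem exists_isRationalInner_eval_div_eq_zero_and_eq {a b γ : ℂ} (ha : ‖a‖ < 1) (hb : ‖b‖ < 1)
    (hγ : ‖γ‖ ≤ ‖mobius a b‖) :
    ∃ N D : ℂ[X], IsRationalInner N D ∧ N.eval a / D.eval a = 0 ∧ N.eval b / D.eval b = γ := by
  set β := mobius a b
  have hu := isRationalInner_X.mobius_comp ha
  have hu_eval (z : ℂ) : (C a * 1 - X).eval z / (1 - C (conj a) * X).eval z = mobius a z := by
    simpa using eval_div_eval_mobius a (N := X) (D := 1) (z := z) (by simp)
  rcases hγ.eq_or_lt with hγ | hγ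
  · obtain ⟨c, hc, rfl⟩ : ∃ c : ℂ, ‖c‖ = 1 ∧ γ = c * β := by
      by_cases hβ : β = 0
      · exact ⟨1, by simp, by simpa [hβ] using hγ⟩
      · exact ⟨γ / β, by rw [norm_div, hγ, div_self (norm_ne_zero_iff.2 hβ)],
          (div_mul_cancel₀ _ hβ).symm⟩
    refine ⟨_, _, hu.C_mul hc, ?_, ?_⟩ <;>
      simp only [eval_mul, eval_C, mul_div_assoc, hu_eval a, hu_eval b, mobius_self,
        mul_zero, β]
  · -- `u ↦ u * mobius c (mobius β u)` with `u = mobius a z` sends `a ↦ 0` and `b ↦ c * β = γ`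
    have hβ : β ≠ 0 := norm_pos_iff.1 ((norm_nonneg γ).trans_lt hγ)
    set c := γ / β
    have hc : ‖c‖ < 1 := by rwa [norm_div, div_lt_one (norm_pos_iff.2 hβ)]
    have hβ1 : ‖β‖ < 1 := norm_mobius_lt_one ha hb
    refine ⟨_, _, hu.mul ((hu.mobius_comp hβ1).mobius_comp hc), ?_, ?_⟩ <;>
      simp only [eval_mul, mul_div_mul_comm, hu_eval a, hu_eval b]
    · simp
    · rw [eval_div_eval_mobius _ (hu.mobius_comp hβ1 |>.eval_ne_zero b hb.le),
        eval_div_eval_mobius _ (hu.eval_ne_zero b hb.le), hu_eval b, mobius_self,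
        mobius_zero, mul_div_cancel₀ _ hβ]

theorem exists_isRationalInner_eval_div_eq {a₁ b₁ a₂ b₂ : ℂ} (ha₁ : ‖a₁‖ < 1) (hb₁ : ‖b₁‖ < 1)
    (ha₂ : ‖a₂‖ < 1) (hb₂ : ‖b₂‖ < 1) (h : ‖mobius a₂ b₂‖ ≤ ‖mobius a₁ b₁‖) :
    ∃ N D : ℂ[X], IsRationalInner N D ∧ N.eval a₁ / D.eval a₁ = a₂ ∧
      N.eval b₁ / D.eval b₁ = b₂ := by
  obtain ⟨N, D, hND, ha, hb⟩ := exists_isRationalInner_eval_div_eq_zero_and_eq ha₁ hb₁ h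
  refine ⟨_, _, hND.mobius_comp ha₂, ?_, ?_⟩
  · rw [eval_div_eval_mobius _ (hND.eval_ne_zero _ ha₁.le), ha, mobius_zero]
  · rw [eval_div_eval_mobius _ (hND.eval_ne_zero _ hb₁.le), hb, mobius_mobius ha₂ hb₂.le]

theorem isOpen_openBidisk : IsOpen openBidisk :=
  (isOpen_lt (continuous_norm.comp continuous_fst) continuous_const).inter
    (isOpen_lt (continuous_norm.comp continuous_snd) continuous_const)

theorem isClosed_closedBidisk : IsClosed closedBidisk :=
  (isClosed_le (continuous_norm.comp continuous_fst) continuous_const).inter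
    (isClosed_le (continuous_norm.comp continuous_snd) continuous_const)

theorem isClosed_zeroSet (q : MvPolynomial (Fin 2) ℂ) : IsClosed (zeroSet q) :=
  isClosed_eq ((MvPolynomial.continuous_eval q).comp (by fun_prop)) continuous_const

@[simp] theorem preimage_swap_openBidisk : Prod.swap ⁻¹' openBidisk = openBidisk := by
  ext; simp [openBidisk, and_comm]

@[simp] theorem preimage_swap_torus : Prod.swap ⁻¹' torus = torus := by
  ext; simp [torus, and_comm]

theorem zeroSet_rename_swap (q : MvPolynomial (Fin 2) ℂ) :
    zeroSet (MvPolynomial.rename (Equiv.swap 0 1) q) = Prod.swap ⁻¹' zeroSet q := by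
  have hswap (p : ℂ × ℂ) : ![p.1, p.2] ∘ Equiv.swap (0 : Fin 2) 1 = ![p.2, p.1] := by
    ext i; fin_cases i <;> rfl
  ext p
  simp [zeroSet, MvPolynomial.eval_rename, hswap]

noncomputable def graphPoly (N D : ℂ[X]) : MvPolynomial (Fin 2) ℂ :=
  MvPolynomial.X 1 * D.toMvPolynomial 0 - N.toMvPolynomial 0

theorem eval_graphPoly (N D : ℂ[X]) (z w : ℂ) :
    MvPolynomial.eval ![z, w] (graphPoly N D) = w * D.eval z - N.eval z := by
  simp [graphPoly, MvPolynomial.eval_toMvPolynomial]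

theorem mem_zeroSet_graphPoly {N D : ℂ[X]} {p : ℂ × ℂ} (hD : D.eval p.1 ≠ 0) :
    p ∈ zeroSet (graphPoly N D) ↔ p.2 = N.eval p.1 / D.eval p.1 := by
  rw [zeroSet, mem_ofPred, eval_graphPoly, sub_eq_zero, eq_div_iff hD]

def IsDistinguishedVariety (q : MvPolynomial (Fin 2) ℂ) : Prop :=
  (zeroSet q ∩ openBidisk).Nonempty ∧
    closure (zeroSet q ∩ openBidisk) ∩ frontier openBidisk ⊆ torus

def IsSchwarzPickVariety (q : MvPolynomial (Fin 2) ℂ) (a b : ℂ × ℂ) (r : ℝ) : Prop :=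
  IsDistinguishedVariety q ∧ ∀ f : ℂ × ℂ → ℂ, DifferentiableOn ℂ f openBidisk →
    (∀ z ∈ zeroSet q ∩ openBidisk, ‖f z‖ ≤ 1) → ‖f a - f b‖ ≤ r * ‖1 - conj (f a) * f b‖

theorem IsSchwarzPickVariety.mono {q : MvPolynomial (Fin 2) ℂ} {a b : ℂ × ℂ} {r s : ℝ}
    (h : IsSchwarzPickVariety q a b r) (hrs : r ≤ s) : IsSchwarzPickVariety q a b s :=
  ⟨h.1, fun f hf hf1 => (h.2 f hf hf1).trans (by gcongr)⟩

namespace IsRationalInner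

variable {N D : ℂ[X]}

theorem isDistinguishedVariety_graphPoly (h : IsRationalInner N D) :
    IsDistinguishedVariety (graphPoly N D) := by
  have h0 : ‖(0 : ℂ)‖ < 1 := by simp
  refine ⟨⟨(0, N.eval 0 / D.eval 0), (mem_zeroSet_graphPoly (h.eval_ne_zero 0 h0.le)).2 rfl,
    h0, h.norm_div_lt_one h0⟩, ?_⟩
  rintro p ⟨hcl, hfr⟩
  obtain ⟨hZ, hp⟩ : p ∈ zeroSet (graphPoly N D) ∩ closedBidisk :=
    closure_minimal (inter_subset_inter_right _ fun _ hp => show _ ∈ closedBidisk from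
      ⟨hp.1.le, hp.2.le⟩) ((isClosed_zeroSet _).inter isClosed_closedBidisk) hcl
  have hp₂ := (mem_zeroSet_graphPoly (h.eval_ne_zero _ hp.1)).1 hZ
  have hp₁ : ‖p.1‖ = 1 := hp.1.eq_of_not_lt fun hlt =>
    (disjoint_frontier_iff_isOpen.2 isOpen_openBidisk).ne_of_mem hfr
      (show p ∈ openBidisk from ⟨hlt, hp₂ ▸ h.norm_div_lt_one hlt⟩) rfl
  exact ⟨hp₁, hp₂ ▸ h.norm_div_eq_one hp₁⟩

theorem isSchwarzPickVariety_graphPoly (h : IsRationalInner N D) {z₁ z₂ : ℂ} (hz₁ : ‖z₁‖ < 1)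
    (hz₂ : ‖z₂‖ < 1) :
    IsSchwarzPickVariety (graphPoly N D) (z₁, N.eval z₁ / D.eval z₁) (z₂, N.eval z₂ / D.eval z₂)
      ‖mobius z₁ z₂‖ := by
  refine ⟨h.isDistinguishedVariety_graphPoly, fun f hf hf1 => ?_⟩
  have hgraph : MapsTo (fun z => (z, N.eval z / D.eval z)) (ball 0 1)
      (zeroSet (graphPoly N D) ∩ openBidisk) := fun z hz =>
    have hz : ‖z‖ < 1 := mem_ball_zero_iff.1 hz
    ⟨(mem_zeroSet_graphPoly (h.eval_ne_zero z hz.le)).2 rfl, hz, h.norm_div_lt_one hz⟩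
  have hd : DifferentiableOn ℂ (fun z => f (z, N.eval z / D.eval z)) (ball 0 1) :=
    hf.comp (differentiableOn_id.prodMk fun z hz =>
        (h.differentiableAt_div (mem_ball_zero_iff.1 hz).le).differentiableWithinAt)
      (hgraph.mono_right inter_subset_right)
  exact norm_sub_le_norm_mobius_mul_of_mapsTo_closedBall hd
    (fun z hz => mem_closedBall_zero_iff.2 (hf1 _ (hgraph hz)))
    (mem_ball_zero_iff.2 hz₁) (mem_ball_zero_iff.2 hz₂)

end IsRationalInner

theorem exists_isSchwarzPickVariety_of_le {a b : ℂ × ℂ} (ha : a ∈ openBidisk)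
    (hb : b ∈ openBidisk) (h : ‖mobius a.2 b.2‖ ≤ ‖mobius a.1 b.1‖) :
    ∃ q, IsSchwarzPickVariety q a b ‖mobius a.1 b.1‖ := by
  obtain ⟨N, D, hND, hNDa, hNDb⟩ := exists_isRationalInner_eval_div_eq ha.1 hb.1 ha.2 hb.2 h
  have := hND.isSchwarzPickVariety_graphPoly ha.1 hb.1
  rw [hNDa, hNDb] at this
  exact ⟨_, this⟩

theorem IsDistinguishedVariety.rename_swap {q : MvPolynomial (Fin 2) ℂ}
    (h : IsDistinguishedVariety q) :
    IsDistinguishedVariety (MvPolynomial.rename (Equiv.swap 0 1) q) := by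
  have hS : zeroSet (MvPolynomial.rename (Equiv.swap 0 1) q) ∩ openBidisk =
      Prod.swap ⁻¹' (zeroSet q ∩ openBidisk) := by
    rw [zeroSet_rename_swap, preimage_inter, preimage_swap_openBidisk]
  refine ⟨hS ▸ h.1.preimage Prod.swap_surjective, ?_⟩
  rintro p ⟨hcl, hfr⟩
  rw [hS, ← Homeomorph.coe_prodComm, ← Homeomorph.preimage_closure] at hcl
  rw [← preimage_swap_openBidisk, ← Homeomorph.coe_prodComm,
    ← Homeomorph.preimage_frontier] at hfr
  rw [← preimage_swap_torus]
  exact h.2 ⟨hcl, hfr⟩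

theorem IsSchwarzPickVariety.rename_swap {q : MvPolynomial (Fin 2) ℂ} {a b : ℂ × ℂ} {r : ℝ}
    (h : IsSchwarzPickVariety q a.swap b.swap r) :
    IsSchwarzPickVariety (MvPolynomial.rename (Equiv.swap 0 1) q) a b r := by
  refine ⟨h.1.rename_swap, fun f hf hf1 => ?_⟩
  have hswap : DifferentiableOn ℂ (f ∘ Prod.swap) openBidisk :=
    hf.comp (differentiable_snd.prodMk differentiable_fst).differentiableOn fun _ hz =>
      ⟨hz.2, hz.1⟩
  simpa using h.2 _ hswap fun z hz => hf1 z.swap <| by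
    rwa [zeroSet_rename_swap, ← preimage_swap_openBidisk, ← preimage_inter, mem_preimage,
      Prod.swap_swap]

/-- **A Schwarz–Pick inequality on a distinguished variety of the bidisk (continuous case).** -/
theorem schwarz_pick_distinguished_variety (a b : ℂ × ℂ)
    (ha : a ∈ openBidisk) (hb : b ∈ openBidisk) :
    ∃ q : MvPolynomial (Fin 2) ℂ,
      (zeroSet q ∩ openBidisk).Nonempty ∧
      closure (zeroSet q ∩ openBidisk) ∩ frontier openBidisk ⊆ torus ∧
      ∀ f : ℂ × ℂ → ℂ, ContinuousOn f closedBidisk → DifferentiableOn ℂ f openBidisk →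
        (∀ z ∈ zeroSet q ∩ openBidisk, ‖f z‖ ≤ 1) →
        ‖f a - f b‖ ≤
          max (‖a.1 - b.1‖ / ‖1 - (starRingEnd ℂ) a.1 * b.1‖)
              (‖a.2 - b.2‖ / ‖1 - (starRingEnd ℂ) a.2 * b.2‖) *
            ‖1 - (starRingEnd ℂ) (f a) * f b‖ := by
  obtain ⟨q, hq⟩ : ∃ q, IsSchwarzPickVariety q a b (max ‖mobius a.1 b.1‖ ‖mobius a.2 b.2‖) := by
    rcases le_total ‖mobius a.2 b.2‖ ‖mobius a.1 b.1‖ with h | h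
    · obtain ⟨q, hq⟩ := exists_isSchwarzPickVariety_of_le ha hb h
      exact ⟨q, hq.mono (le_max_left _ _)⟩
    · obtain ⟨q, hq⟩ := exists_isSchwarzPickVariety_of_le (a := a.swap) (b := b.swap)
        ⟨ha.2, ha.1⟩ ⟨hb.2, hb.1⟩ h
      exact ⟨_, hq.rename_swap.mono (le_max_right _ _)⟩
  refine ⟨q, hq.1.1, hq.1.2, fun f _ hf hf1 => ?_⟩
  simpa only [norm_mobius] using hq.2 f hf hf1
end
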